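/- Block off-diagonal distortion implies diagonal distortion: with $O^c = (A\times C)\cup(C\times A)$ and $\tilde\Theta$ the maximum-determinant completion, if $(i,j) \in A\times(A\cup B)$ with $i\neq j$ and $\tilde\Theta_{ij} \neq \Theta_{ij}$, then $\tilde\Theta_{ii} < \Theta_{ii}$. Similarly, if $(i,j) \in (B\cup C)\times C$ with $i\neq j$ and $\tilde\Theta_{ij} \neq \Theta_{ij}$, then $\tilde\Theta_{jj} < \Theta_{jj}$. -/

import Mathlib

/-!
Write `Δ = Θ'⁻¹ - Θ⁻¹`, so that `Θ - Θ' = Θ' Δ Θ` and row `i` of `Θ - Θ'` is `Θ v` with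
`v = (Θ' Δ)ᵢ`. If the inverses agree off the rows and columns indexed by `C` and row `i` of `Θ'`
vanishes on `C`, then `Θ'ᵢ ⬝ v = Θ'ᵢ ⬝ Δ Θ'ᵢ = 0`, hence
`vᵀ Θ v = v ⬝ (Θᵢ - Θ'ᵢ) = (Θ v)ᵢ = Θᵢᵢ - Θ'ᵢᵢ`,
which is positive as soon as row `i` has changed at all. The second half of the theorem is the
first one with `A` and `C` exchanged, read through the symmetry of `Θ` and `Θ'`.
-/

namespace Matrix

variable {n : Type*} [Fintype n]

theorem sub_eq_mul_inv_sub_inv_mul [DecidableEq n] {R : Type*} [CommRing R]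
    {M N : Matrix n n R} (hM : IsUnit M) (hN : IsUnit N) :
    M - N = N * (N⁻¹ - M⁻¹) * M := by
  rw [mul_sub, mul_nonsing_inv _ ((isUnit_iff_isUnit_det N).mp hN), sub_mul, one_mul,
    Matrix.mul_assoc, nonsing_inv_mul _ ((isUnit_iff_isUnit_det M).mp hM), Matrix.mul_one]

theorem dotProduct_mulVec_eq_zero_of_vanishing_on {R : Type*} [CommSemiring R]
    {M : Matrix n n R} {x : n → R} (C : Set n) (hx : ∀ k ∈ C, x k = 0)
    (hM : ∀ k l, k ∉ C → l ∉ C → M k l = 0) :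
    x ⬝ᵥ M *ᵥ x = 0 := by
  simp only [dotProduct, mulVec, Finset.mul_sum]
  refine Finset.sum_eq_zero fun k _ => Finset.sum_eq_zero fun l _ => ?_
  by_cases hk : k ∈ C
  · simp [hx k hk]
  by_cases hl : l ∈ C
  · simp [hx l hl]
  · simp [hM k l hk hl]

theorem PosDef.apply_self_lt_of_row_sub_eq_mulVec {Θ Θ' : Matrix n n ℝ} (hΘ : Θ.PosDef)
    {i : n} {v : n → ℝ} (hrow : Θ i - Θ' i = Θ *ᵥ v) (horth : Θ' i ⬝ᵥ v = 0)
    (hne : Θ' i ≠ Θ i) :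
    Θ' i i < Θ i i := by
  have hv : v ≠ 0 := by
    rintro rfl
    exact hne (sub_eq_zero.mp (by simpa using hrow)).symm
  have hquad : v ⬝ᵥ Θ *ᵥ v = Θ i i - Θ' i i := by
    calc v ⬝ᵥ Θ *ᵥ v = v ⬝ᵥ (Θ i - Θ' i) := by rw [hrow]
      _ = (Θ *ᵥ v) i - Θ' i ⬝ᵥ v := by
        rw [dotProduct_sub, dotProduct_comm, dotProduct_comm v]; rfl
      _ = Θ i i - Θ' i i := by rw [horth, sub_zero, ← hrow, Pi.sub_apply]
  have := hΘ.dotProduct_mulVec_pos hv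
  rw [star_trivial, hquad] at this
  linarith

theorem PosDef.apply_self_lt_of_inv_eq_off {Θ Θ' : Matrix n n ℝ} [DecidableEq n]
    (hΘ : Θ.PosDef) (hΘ' : IsUnit Θ') (C : Set n)
    (hagree : ∀ k l, k ∉ C → l ∉ C → Θ'⁻¹ k l = Θ⁻¹ k l)
    {i : n} (hzero : ∀ k ∈ C, Θ' i k = 0) (hne : Θ' i ≠ Θ i) :
    Θ' i i < Θ i i := by
  set Δ := Θ'⁻¹ - Θ⁻¹
  have hsymm : Θᵀ = Θ := by
    simpa [conjTranspose_eq_transpose_of_trivial] using hΘ.isHermitian.eq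
  refine hΘ.apply_self_lt_of_row_sub_eq_mulVec (v := Θ' i ᵥ* Δ) ?_ ?_ hne
  · change (Θ - Θ') i = _
    rw [sub_eq_mul_inv_sub_inv_mul hΘ.isUnit hΘ', mul_apply_eq_vecMul,
      mul_apply_eq_vecMul, ← vecMul_transpose, hsymm]
  · rw [dotProduct_comm, ← dotProduct_mulVec]
    exact dotProduct_mulVec_eq_zero_of_vanishing_on C hzero fun k l hk hl => by
      simp [Δ, hagree k l hk hl]

end Matrix

theorem madgq_offdiag_implies_diag_general (p : ℕ) (Θ Θ' : Matrix (Fin p) (Fin p) ℝ)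
    (hΘ : Θ.PosDef) (hΘ' : Θ'.PosDef) (A B C : Finset (Fin p))
    (hz1 : ∀ i ∈ A, ∀ j ∈ C, Θ' i j = 0)
    (hz2 : ∀ i ∈ C, ∀ j ∈ A, Θ' i j = 0)
    (hagree : ∀ i j : Fin p, ¬((i ∈ A ∧ j ∈ C) ∨ (i ∈ C ∧ j ∈ A)) →
      Θ'⁻¹ i j = Θ⁻¹ i j) :
    (∀ i ∈ A, ∀ j ∈ A ∪ B, i ≠ j → Θ' i j ≠ Θ i j → Θ' i i < Θ i i) ∧
    (∀ i ∈ B ∪ C, ∀ j ∈ C, i ≠ j → Θ' i j ≠ Θ i j → Θ' j j < Θ j j) := by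
  constructor
  · intro i hi j _ _ hne
    exact hΘ.apply_self_lt_of_inv_eq_off hΘ'.isUnit C
      (fun k l hk hl => hagree k l (by simp_all)) (hz1 i hi)
      fun hrow => hne (congrFun hrow j)
  · intro i _ j hj _ hne
    refine hΘ.apply_self_lt_of_inv_eq_off hΘ'.isUnit A
      (fun k l hk hl => hagree k l (by simp_all)) (hz2 j hj) fun hrow => hne ?_
    rw [← hΘ.isHermitian.apply, ← hΘ'.isHermitian.apply, congrFun hrow i]

/-- Block off-diagonal distortion implies diagonal distortion:
with `O^c = (A×C) ∪ (C×A)` and `Θ'` the maximum-determinant completion, if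
`(i,j) ∈ A×(A∪B)`, `i ≠ j` and `Θ'_{ij} ≠ Θ_{ij}`, then `Θ'_{ii} < Θ_{ii}`;
if `(i,j) ∈ (B∪C)×C`, `i ≠ j` and `Θ'_{ij} ≠ Θ_{ij}`, then `Θ'_{jj} < Θ_{jj}`. -/
theorem madgq_offdiag_implies_diag (p : ℕ) (Θ Θ' : Matrix (Fin p) (Fin p) ℝ)
    (hΘ : Θ.PosDef) (hΘ' : Θ'.PosDef) (A B C : Finset (Fin p))
    (hAB : Disjoint A B) (hAC : Disjoint A C) (hBC : Disjoint B C)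
    (hcover : A ∪ B ∪ C = Finset.univ)
    (hz1 : ∀ i ∈ A, ∀ j ∈ C, Θ' i j = 0)
    (hz2 : ∀ i ∈ C, ∀ j ∈ A, Θ' i j = 0)
    (hagree : ∀ i j : Fin p, ¬((i ∈ A ∧ j ∈ C) ∨ (i ∈ C ∧ j ∈ A)) →
      Θ'⁻¹ i j = Θ⁻¹ i j) :
    (∀ i ∈ A, ∀ j ∈ A ∪ B, i ≠ j → Θ' i j ≠ Θ i j → Θ' i i < Θ i i) ∧
    (∀ i ∈ B ∪ C, ∀ j ∈ C, i ≠ j → Θ' i j ≠ Θ i j → Θ' j j < Θ j j) :=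
  madgq_offdiag_implies_diag_general p Θ Θ' hΘ hΘ' A B C hz1 hz2 hagree
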